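/- Let m ≥ 3 and k ≥ 1, and let S ⊆ (ℤ/mℤ)^k be a finite set such that no two distinct vectors of S differ by an element of {0, 1}^k (where 0 and 1 denote the images of the integers 0 and 1 in ℤ/mℤ). Then the direct power D_m^k of the dihedral group D_m = ⟨x, y | x^m = y² = 1, yxy = x⁻¹⟩ realizes ⟨2^k, 2^k, |S|⟩: the subgroups ⟨y⟩^k and ⟨yx⟩^k (each of order 2^k) together with the subset {(x^{s₁}, …, x^{s_k}) : (s₁, …, s_k) ∈ S} of ⟨x⟩^k satisfy the triple product property. -/

import Mathlib

/-!
Coordinatewise, a product `a * b * x^w` with `a ∈ ⟨y⟩`, `b ∈ ⟨yx⟩` can only be trivial when either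
`a = b = 1, w = 0` or `a = y, b = yx, w = -1`, since `y * yx = x`. So a triple-product relation
forces the difference `v - u` of the two vectors of `S` behind the third quotient into `{0, 1}^k`,
hence `u = v`, and then `w = 0 ≠ -1` in every coordinate makes the first two quotients trivial too.
-/

/-- The right quotient set `Q(S) = {s₁s₂⁻¹ : s₁, s₂ ∈ S}` of a subset of a group. -/
def rightQuotient {G : Type*} [Group G] (S : Set G) : Set G :=
  {g | ∃ s₁ ∈ S, ∃ s₂ ∈ S, g = s₁ * s₂⁻¹}

/-- Subsets `S₁, S₂, S₃` of a group satisfy the triple product property if whenever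
`qᵢ ∈ Q(Sᵢ)` and `q₁q₂q₃ = 1`, we have `q₁ = q₂ = q₃ = 1`. -/
def TPP {G : Type*} [Group G] (S₁ S₂ S₃ : Set G) : Prop :=
  ∀ q₁ ∈ rightQuotient S₁, ∀ q₂ ∈ rightQuotient S₂, ∀ q₃ ∈ rightQuotient S₃,
    q₁ * q₂ * q₃ = 1 → q₁ = 1 ∧ q₂ = 1 ∧ q₃ = 1

/-- A group `G` realizes `⟨n₁, n₂, n₃⟩` if there are finite subsets `Sᵢ ⊆ G` with
`|Sᵢ| = nᵢ` satisfying the triple product property. -/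
def Realizes (G : Type*) [Group G] (n₁ n₂ n₃ : ℕ) : Prop :=
  ∃ S₁ S₂ S₃ : Set G, S₁.Finite ∧ S₂.Finite ∧ S₃.Finite ∧
    S₁.ncard = n₁ ∧ S₂.ncard = n₂ ∧ S₃.ncard = n₃ ∧ TPP S₁ S₂ S₃

/-- The subgroup `⟨y⟩^k` of `D_m^k` (as a set), where `y = sr 0`. -/
def dT₁ (m k : ℕ) : Set (Fin k → DihedralGroup m) :=
  {g | ∀ i : Fin k, g i = 1 ∨ g i = DihedralGroup.sr 0}

/-- The subgroup `⟨yx⟩^k` of `D_m^k` (as a set), where `yx = sr 1`. -/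
def dT₂ (m k : ℕ) : Set (Fin k → DihedralGroup m) :=
  {g | ∀ i : Fin k, g i = 1 ∨ g i = DihedralGroup.sr 1}

/-- The subset `{(x^{s₁}, …, x^{s_k}) : s ∈ S}` of `⟨x⟩^k ⊆ D_m^k`. -/
def dT₃ (m k : ℕ) (S : Set (Fin k → ZMod m)) : Set (Fin k → DihedralGroup m) :=
  {g | ∃ s ∈ S, g = fun i => DihedralGroup.r (s i)}

open DihedralGroup Subgroup

lemma rightQuotient_coe_subgroup {G : Type*} [Group G] (H : Subgroup G) : rightQuotient (H : Set G) = H := by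
  ext g
  constructor
  · rintro ⟨a, ha, b, hb, rfl⟩
    exact H.mul_mem ha (H.inv_mem hb)
  · exact fun hg => ⟨g, hg, 1, H.one_mem, by simp⟩

section Involution

variable {G : Type*} [Group G] {t : G}

lemma mem_zpowers_iff_of_orderOf_eq_two (ht : orderOf t = 2) {g : G} :
    g ∈ zpowers t ↔ g = 1 ∨ g = t := by
  rw [mem_zpowers_iff]
  constructor
  · rintro ⟨n, rfl⟩
    rw [← zpow_mod_orderOf, ht]
    rcases Int.emod_two_eq_zero_or_one n with h | h <;> simp [h]
  · rintro (rfl | rfl)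
    exacts [⟨0, zpow_zero t⟩, ⟨1, zpow_one g⟩]

variable {ι : Type*}

lemma coe_pi_zpowers_of_orderOf_eq_two (ht : orderOf t = 2) :
    ((pi Set.univ fun _ : ι => zpowers t : Subgroup (ι → G)) : Set (ι → G)) =
      {g | ∀ i, g i = 1 ∨ g i = t} := by
  ext g
  simp [mem_pi, mem_zpowers_iff_of_orderOf_eq_two ht]

lemma ncard_pi_pair_of_orderOf_eq_two [Fintype ι] (ht : orderOf t = 2) :
    {g : ι → G | ∀ i, g i = 1 ∨ g i = t}.ncard = 2 ^ Fintype.card ι := by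
  rw [← coe_pi_zpowers_of_orderOf_eq_two ht, coe_pi, ← Nat.card_coe_set_eq,
    Nat.card_congr (Equiv.Set.univPi _), Nat.card_pi]
  simp [Nat.card_zpowers, ht]

end Involution

section Dihedral

variable {m k : ℕ}

lemma dT₁_eq_coe_pi_zpowers :
    dT₁ m k = (pi Set.univ fun _ => zpowers (sr 0) : Subgroup (Fin k → DihedralGroup m)) :=
  (coe_pi_zpowers_of_orderOf_eq_two (orderOf_sr 0)).symm

lemma dT₂_eq_coe_pi_zpowers :
    dT₂ m k = (pi Set.univ fun _ => zpowers (sr 1) : Subgroup (Fin k → DihedralGroup m)) :=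
  (coe_pi_zpowers_of_orderOf_eq_two (orderOf_sr 1)).symm

lemma ncard_dT₁ : (dT₁ m k).ncard = 2 ^ k := by
  rw [dT₁, ncard_pi_pair_of_orderOf_eq_two (orderOf_sr 0), Fintype.card_fin]

lemma ncard_dT₂ : (dT₂ m k).ncard = 2 ^ k := by
  rw [dT₂, ncard_pi_pair_of_orderOf_eq_two (orderOf_sr 1), Fintype.card_fin]

lemma rightQuotient_dT₁ : rightQuotient (dT₁ m k) = dT₁ m k := by
  rw [dT₁_eq_coe_pi_zpowers, rightQuotient_coe_subgroup]

lemma rightQuotient_dT₂ : rightQuotient (dT₂ m k) = dT₂ m k := by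
  rw [dT₂_eq_coe_pi_zpowers, rightQuotient_coe_subgroup]

lemma dT₃_eq_image (S : Set (Fin k → ZMod m)) : dT₃ m k S = (fun s i => r (s i)) '' S := by
  ext g
  constructor <;> rintro ⟨s, hs, rfl⟩ <;> exact ⟨s, hs, rfl⟩

lemma ncard_dT₃ (S : Set (Fin k → ZMod m)) : (dT₃ m k S).ncard = S.ncard := by
  rw [dT₃_eq_image, Set.ncard_image_of_injective]
  intro u v h
  funext i
  simpa using congrFun h i

lemma exists_of_mem_rightQuotient_dT₃ {S : Set (Fin k → ZMod m)} {q : Fin k → DihedralGroup m}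
    (hq : q ∈ rightQuotient (dT₃ m k S)) : ∃ u ∈ S, ∃ v ∈ S, q = fun i => r (u i - v i) := by
  obtain ⟨-, ⟨u, hu, rfl⟩, -, ⟨v, hv, rfl⟩, rfl⟩ := hq
  refine ⟨u, hu, v, hv, funext fun i => ?_⟩
  simp [r_mul_r, sub_eq_add_neg]

lemma eq_of_mul_mul_r_eq_one {a b : DihedralGroup m} {w : ZMod m}
    (ha : a = 1 ∨ a = sr 0) (hb : b = 1 ∨ b = sr 1) (h : a * b * r w = 1) :
    (a = 1 ∧ b = 1 ∧ w = 0) ∨ (a = sr 0 ∧ b = sr 1 ∧ w = -1) := by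
  rcases ha with rfl | rfl <;> rcases hb with rfl | rfl <;>
    simp_all [one_def, r_mul_r, sr_mul_r, sr_mul_sr, r_mul_sr, add_eq_zero_iff_eq_neg', -r_zero]

lemma tpp_dT (hm : m ≠ 1) (S : Set (Fin k → ZMod m))
    (hS : ∀ u ∈ S, ∀ v ∈ S, (∀ i : Fin k, u i - v i = 0 ∨ u i - v i = 1) → u = v) :
    TPP (dT₁ m k) (dT₂ m k) (dT₃ m k S) := by
  have : Nontrivial (ZMod m) := ZMod.nontrivial_iff.mpr hm
  rw [TPP, rightQuotient_dT₁, rightQuotient_dT₂]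
  rintro a ha b hb q hq habq
  obtain ⟨u, hu, v, hv, rfl⟩ := exists_of_mem_rightQuotient_dT₃ hq
  have hcoord (i : Fin k) : (a i = 1 ∧ b i = 1 ∧ u i - v i = 0) ∨
      (a i = sr 0 ∧ b i = sr 1 ∧ u i - v i = -1) :=
    eq_of_mul_mul_r_eq_one (ha i) (hb i) (congrFun habq i)
  obtain rfl : v = u := hS v hv u hu fun i => by
    rcases hcoord i with ⟨-, -, h⟩ | ⟨-, -, h⟩
    · left; rw [← neg_sub, h, neg_zero]
    · right; rw [← neg_sub, h, neg_neg]
  have hab (i : Fin k) : a i = 1 ∧ b i = 1 := by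
    rcases hcoord i with ⟨ha, hb, -⟩ | ⟨-, -, h⟩
    · exact ⟨ha, hb⟩
    · simp [eq_comm] at h
  exact ⟨funext fun i => (hab i).1, funext fun i => (hab i).2, funext fun i => by simp⟩

end Dihedral

theorem stmt_18_general (m k : ℕ) (hm : 3 ≤ m)
    (S : Set (Fin k → ZMod m))
    (hS : ∀ u ∈ S, ∀ v ∈ S, (∀ i : Fin k, u i - v i = 0 ∨ u i - v i = 1) → u = v) :
    (∃ K₁ K₂ : Subgroup (Fin k → DihedralGroup m),
      (K₁ : Set (Fin k → DihedralGroup m)) = dT₁ m k ∧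
      (K₂ : Set (Fin k → DihedralGroup m)) = dT₂ m k) ∧
    (dT₁ m k).ncard = 2 ^ k ∧ (dT₂ m k).ncard = 2 ^ k ∧ (dT₃ m k S).ncard = S.ncard ∧
    TPP (dT₁ m k) (dT₂ m k) (dT₃ m k S) ∧
    Realizes (Fin k → DihedralGroup m) (2 ^ k) (2 ^ k) S.ncard := by
  have : NeZero m := ⟨by omega⟩
  have htpp := tpp_dT (by omega) S hS
  refine ⟨⟨_, _, dT₁_eq_coe_pi_zpowers.symm, dT₂_eq_coe_pi_zpowers.symm⟩,
    ncard_dT₁, ncard_dT₂, ncard_dT₃ S, htpp, ?_⟩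
  exact ⟨_, _, _, Set.toFinite _, Set.toFinite _, Set.toFinite _,
    ncard_dT₁, ncard_dT₂, ncard_dT₃ S, htpp⟩

theorem stmt_18 (m k : ℕ) (hm : 3 ≤ m) (hk : 1 ≤ k)
    (S : Set (Fin k → ZMod m)) (hSfin : S.Finite)
    (hS : ∀ u ∈ S, ∀ v ∈ S, (∀ i : Fin k, u i - v i = 0 ∨ u i - v i = 1) → u = v) :
    (∃ K₁ K₂ : Subgroup (Fin k → DihedralGroup m),
      (K₁ : Set (Fin k → DihedralGroup m)) = dT₁ m k ∧
      (K₂ : Set (Fin k → DihedralGroup m)) = dT₂ m k) ∧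
    (dT₁ m k).ncard = 2 ^ k ∧ (dT₂ m k).ncard = 2 ^ k ∧ (dT₃ m k S).ncard = S.ncard ∧
    TPP (dT₁ m k) (dT₂ m k) (dT₃ m k S) ∧
    Realizes (Fin k → DihedralGroup m) (2 ^ k) (2 ^ k) S.ncard :=
  stmt_18_general m k hm S hS
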